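/- arXiv:math/0309034 — 3 statements merged into one kernel-verified Lean document; each statement's English description precedes it below -/
import Mathlib

section
/- Suppose for every m ∈ ℕ there exists x_m ∈ N₀ (a compact subset of ℝᵏ) such that the solution of x' = v(x) + ε(t,x), x(t₀) = x_m passes through int N₁, ..., int N_m at times t₀ < t₁ᵐ < ⋯ < t_mᵐ, with the gaps t_iᵐ - t_{i-1}ᵐ uniformly bounded (above by M and below by δ' > 0) independently of m and i. Assume solutions depend continuously on initial conditions and exist for all time. Then there exists x₀ ∈ N₀ and a strictly increasing sequence t₀ < t₁ < t₂ < ⋯ such that the solution through (t₀, x₀) satisfies x(t_i) ∈ N_i for all i ≥ 1, where N_i are the closures of the given compact sets. -/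
/-!
Record each finite chain by its initial point and its sequence of time gaps, padded with a
constant gap after the last section. These records lie in the compact set `N₀ × [δ', M]^ℕ`,
and for each `i` the condition "the solution is in `Nᵢ` at time `t₀ + g₀ + ⋯ + g_{i-1}`" is
closed by continuity of the flow. The `m`-th record satisfies the first `m` conditions, so by
the finite intersection property some record satisfies all of them; its gaps are at least
`δ' > 0`, so the times it defines increase strictly.
-/

open Set Finset

theorem IsCompact.exists_forall_mem_of_forall_lt {X : Type*} [TopologicalSpace X] {K : Set X}
    (hK : IsCompact K) {C : ℕ → Set X} (hC : ∀ i, IsClosed (C i))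
    (h : ∀ m, ∃ p ∈ K, ∀ i < m, p ∈ C i) : ∃ p ∈ K, ∀ i, p ∈ C i := by
  obtain ⟨p, hpK, hpC⟩ := hK.inter_iInter_nonempty C hC fun u => by
    obtain ⟨p, hpK, hpC⟩ := h (u.sup id + 1)
    exact ⟨p, hpK, mem_iInter₂.2 fun i hi => hpC i (Nat.lt_succ_of_le (le_sup (f := id) hi))⟩
  exact ⟨p, hpK, mem_iInter.1 hpC⟩

def gapSeq {m : ℕ} (t : Fin (m + 1) → ℝ) (d : ℝ) (j : ℕ) : ℝ :=
  if h : j < m then t ⟨j + 1, by omega⟩ - t ⟨j, by omega⟩ else d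

lemma gapSeq_mem_Icc {m : ℕ} {t : Fin (m + 1) → ℝ} {a b d : ℝ}
    (ht : ∀ i : Fin m, a ≤ t i.succ - t i.castSucc ∧ t i.succ - t i.castSucc ≤ b)
    (hd : d ∈ Icc a b) (j : ℕ) : gapSeq t d j ∈ Icc a b := by
  unfold gapSeq
  split_ifs with hj
  · exact ht ⟨j, hj⟩
  · exact hd

lemma add_sum_range_gapSeq {m : ℕ} (t : Fin (m + 1) → ℝ) (d : ℝ) (i : Fin (m + 1)) :
    t 0 + ∑ j ∈ range i, gapSeq t d j = t i := by
  induction i using Fin.induction with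
  | zero => simp
  | succ i ih =>
    rw [Fin.val_castSucc] at ih
    rw [Fin.val_succ, sum_range_succ, ← add_assoc, ih, gapSeq, dif_pos i.isLt]
    exact add_sub_cancel (t i.castSucc) (t i.succ)

lemma strictMono_add_sum_range {g : ℕ → ℝ} (hg : ∀ j, 0 < g j) (t₀ : ℝ) :
    StrictMono fun i => t₀ + ∑ j ∈ range i, g j :=
  strictMono_nat_of_lt_succ fun i => by simpa [sum_range_succ] using hg i

theorem stmt10_general {k : ℕ}
    (φ : ℝ → ℝ → EuclideanSpace ℝ (Fin k) → EuclideanSpace ℝ (Fin k))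
    (hφcont : Continuous fun p : ℝ × ℝ × EuclideanSpace ℝ (Fin k) => φ p.1 p.2.1 p.2.2)
    (N : ℕ → Set (EuclideanSpace ℝ (Fin k))) (hN : ∀ i, IsCompact (N i))
    (t₀ δ' M : ℝ) (hδ' : 0 < δ')
    (hfin : ∀ m : ℕ, ∃ x ∈ N 0, ∃ t : Fin (m + 1) → ℝ, t 0 = t₀ ∧
      (∀ i : Fin m, δ' ≤ t i.succ - t i.castSucc ∧ t i.succ - t i.castSucc ≤ M) ∧
      ∀ i : Fin m, φ (t i.succ) t₀ x ∈ interior (N (i.succ : ℕ))) :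
    ∃ x₀ ∈ N 0, ∃ t : ℕ → ℝ, t 0 = t₀ ∧ StrictMono t ∧
      ∀ i : ℕ, 1 ≤ i → φ (t i) t₀ x₀ ∈ N i := by
  choose x hx T hT0 hTgap hTmem using hfin
  have hδM : δ' ∈ Icc δ' M := ⟨le_rfl, (hTgap 1 0).1.trans (hTgap 1 0).2⟩
  let C (i : ℕ) : Set (EuclideanSpace ℝ (Fin k) × (ℕ → ℝ)) :=
    {p | φ (t₀ + ∑ j ∈ range (i + 1), p.2 j) t₀ p.1 ∈ N (i + 1)}
  have hC (i : ℕ) : IsClosed (C i) := (hN _).isClosed.preimage (by fun_prop)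
  have hK : IsCompact (N 0 ×ˢ univ.pi fun _ : ℕ => Icc δ' M) :=
    (hN 0).prod (isCompact_univ_pi fun _ => isCompact_Icc)
  obtain ⟨⟨x₀, g⟩, ⟨hx₀, hg⟩, hgC⟩ := hK.exists_forall_mem_of_forall_lt hC fun m =>
    ⟨(x m, gapSeq (T m) δ'), ⟨hx m, fun j _ => gapSeq_mem_Icc (hTgap m) hδM j⟩, fun i hi => by
      simpa [C, ← hT0 m, add_sum_range_gapSeq (T m) δ' ⟨i + 1, by omega⟩] using
        interior_subset (hTmem m ⟨i, hi⟩)⟩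
  refine ⟨x₀, hx₀, fun i => t₀ + ∑ j ∈ range i, g j, by simp,
    strictMono_add_sum_range (fun j => hδ'.trans_le (hg j trivial).1) t₀, fun i hi => ?_⟩
  obtain ⟨n, rfl⟩ := Nat.exists_eq_add_of_le' hi
  exact hgC n

/-- Compactness/diagonal argument: if for every `m` there is an initial point `xₘ ∈ N₀`
whose solution of `x' = v(x) + ε(t,x)`, `x(t₀) = xₘ` visits `int N₁, …, int Nₘ` at times
`t₀ < t₁ᵐ < ⋯ < tₘᵐ` with gaps uniformly bounded in `[δ', M]`, then there is a point
`x₀ ∈ N₀` and a strictly increasing sequence of times `t₀ < t₁ < ⋯` whose solution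
visits every `Nᵢ`.  Here `φ t T y` is the (globally defined) solution at time `t` with
initial condition `x(T) = y`, depending continuously on all its arguments. -/
theorem stmt10 {k : ℕ}
    (v : EuclideanSpace ℝ (Fin k) → EuclideanSpace ℝ (Fin k))
    (ε : ℝ × EuclideanSpace ℝ (Fin k) → EuclideanSpace ℝ (Fin k))
    (hv : ContDiff ℝ 1 v) (hε : Continuous ε) (hεbd : ∃ C, ∀ p, ‖ε p‖ ≤ C)
    (φ : ℝ → ℝ → EuclideanSpace ℝ (Fin k) → EuclideanSpace ℝ (Fin k))
    (hφcont : Continuous fun p : ℝ × ℝ × EuclideanSpace ℝ (Fin k) => φ p.1 p.2.1 p.2.2)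
    (hφinit : ∀ T y, φ T T y = y)
    (hφode : ∀ T y t, HasDerivAt (fun τ => φ τ T y) (v (φ t T y) + ε (t, φ t T y)) t)
    (N : ℕ → Set (EuclideanSpace ℝ (Fin k))) (hN : ∀ i, IsCompact (N i))
    (t₀ δ' M : ℝ) (hδ' : 0 < δ')
    (hfin : ∀ m : ℕ, ∃ x ∈ N 0, ∃ t : Fin (m + 1) → ℝ, t 0 = t₀ ∧
      (∀ i : Fin m, δ' ≤ t i.succ - t i.castSucc ∧ t i.succ - t i.castSucc ≤ M) ∧
      ∀ i : Fin m, φ (t i.succ) t₀ x ∈ interior (N (i.succ : ℕ))) :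
    ∃ x₀ ∈ N 0, ∃ t : ℕ → ℝ, t 0 = t₀ ∧ StrictMono t ∧
      ∀ i : ℕ, 1 ≤ i → φ (t i) t₀ x₀ ∈ N i :=
  stmt10_general φ hφcont N hN t₀ δ' M hδ' hfin
end

section
/- Let F : XN → (ℝᵏ × ℝ)^{n+1} be the map F((x₀,t₀),...,(x_n,t_n)) = ((x₀ - g(x_n), t₀), (x₁ - f₁^{t₀}(x₀), t₁ - σ₁(x₀,t₀)), ..., (x_n - f_n^{t_{n-1}}(x_{n-1}), t_n - σ_n(x_{n-1},t_{n-1}))). If F(x) = 0 for some x = ((x₀,t₀),...,(x_n,t_n)) in the interior of XN = (N₀ × [-1,1]) × (N₁ × I₁) × ⋯ × (N_n × I_n), and each f_i^T(y) equals the value at time σ_i(y,T) of the solution of x' = v(x) + ε(t,x) with x(T) = y, then t₀ = 0, the times satisfy 0 = t₀ < t₁ < ⋯ < t_n (assuming σ_i(y,T) > T for all y, T), and the solution x(·) of the ODE with x(t₀) = x₀ satisfies x(t_i) ∈ int N_i for i = 1, ..., n. -/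
open Set Metric

theorem flow_apply_eq_of_forall_succ {α τ : Type*} {n : ℕ} {φ : τ → τ → α → α}
    (hφinit : ∀ T y, φ T T y = y) (hφflow : ∀ a b c y, φ c b (φ b a y) = φ c a y)
    {t : Fin (n + 1) → τ} {x : Fin (n + 1) → α}
    (hstep : ∀ i : Fin n, x i.succ = φ (t i.succ) (t i.castSucc) (x i.castSucc))
    (i : Fin (n + 1)) : φ (t i) (t 0) (x 0) = x i := by
  induction i using Fin.induction with
  | zero => exact hφinit _ _
  | succ i ih => rw [← hφflow (t 0) (t i.castSucc) (t i.succ) (x 0), ih, ← hstep i]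

theorem stmt12_general {k n : ℕ}
    (φ : ℝ → ℝ → EuclideanSpace ℝ (Fin k) → EuclideanSpace ℝ (Fin k))
    (hφinit : ∀ T y, φ T T y = y)
    (hφflow : ∀ a b c y, φ c b (φ b a y) = φ c a y)
    (σ : Fin n → EuclideanSpace ℝ (Fin k) → ℝ → ℝ)
    (hσ : ∀ i y T, T < σ i y T)
    (f : Fin n → ℝ → EuclideanSpace ℝ (Fin k) → EuclideanSpace ℝ (Fin k))
    (hf : ∀ i T y, f i T y = φ (σ i y T) T y)
    (N : Fin (n + 1) → Set (EuclideanSpace ℝ (Fin k)))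
    (x : Fin (n + 1) → EuclideanSpace ℝ (Fin k)) (t : Fin (n + 1) → ℝ)
    (hx : ∀ i, x i ∈ interior (N i))
    (hFt0 : t 0 = 0)
    (hFx : ∀ i : Fin n, x i.succ - f i (t i.castSucc) (x i.castSucc) = 0)
    (hFt : ∀ i : Fin n, t i.succ - σ i (x i.castSucc) (t i.castSucc) = 0) :
    t 0 = 0 ∧ StrictMono t ∧
      ∀ i : Fin n, φ (t i.succ) (t 0) (x 0) ∈ interior (N i.succ) := by
  have ht (i : Fin n) : t i.succ = σ i (x i.castSucc) (t i.castSucc) := sub_eq_zero.mp (hFt i)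
  have hstep (i : Fin n) : x i.succ = φ (t i.succ) (t i.castSucc) (x i.castSucc) := by
    rw [sub_eq_zero.mp (hFx i), hf, ← ht i]
  refine ⟨hFt0, Fin.strictMono_iff_lt_succ.mpr fun i => ht i ▸ hσ i _ _, fun i => ?_⟩
  rw [flow_apply_eq_of_forall_succ hφinit hφflow hstep]
  exact hx i.succ

/-- Extracting the trajectory conclusion from a zero of `F`.  Here `φ t T y` is the
solution of `x' = v(x) + ε(t,x)` with `x(T) = y` (with the flow/cocycle property),
`σ i y T > T` are the return times and `f i T y = φ (σ i y T) T y` the Poincaré maps.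
If `F(x) = 0` at a point of the interior of `XN` (encoded componentwise by the
hypotheses `hF0, hFt0, hFx, hFt` together with `hx`), then `t₀ = 0`, the times are
strictly increasing and the solution through `(t₀, x₀)` satisfies `x(tᵢ) ∈ int Nᵢ`. -/
theorem stmt12 {k n : ℕ}
    (v : EuclideanSpace ℝ (Fin k) → EuclideanSpace ℝ (Fin k))
    (ε : ℝ × EuclideanSpace ℝ (Fin k) → EuclideanSpace ℝ (Fin k))
    (hv : ContDiff ℝ 1 v) (hε : Continuous ε)
    (φ : ℝ → ℝ → EuclideanSpace ℝ (Fin k) → EuclideanSpace ℝ (Fin k))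
    (hφinit : ∀ T y, φ T T y = y)
    (hφode : ∀ T y t, HasDerivAt (fun τ => φ τ T y) (v (φ t T y) + ε (t, φ t T y)) t)
    (hφflow : ∀ a b c y, φ c b (φ b a y) = φ c a y)
    (σ : Fin n → EuclideanSpace ℝ (Fin k) → ℝ → ℝ)
    (hσ : ∀ i y T, T < σ i y T)
    (f : Fin n → ℝ → EuclideanSpace ℝ (Fin k) → EuclideanSpace ℝ (Fin k))
    (hf : ∀ i T y, f i T y = φ (σ i y T) T y)
    (g : EuclideanSpace ℝ (Fin k) → EuclideanSpace ℝ (Fin k))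
    (N : Fin (n + 1) → Set (EuclideanSpace ℝ (Fin k)))
    (x : Fin (n + 1) → EuclideanSpace ℝ (Fin k)) (t : Fin (n + 1) → ℝ)
    (hx : ∀ i, x i ∈ interior (N i))
    (hF0 : x 0 - g (x (Fin.last n)) = 0)
    (hFt0 : t 0 = 0)
    (hFx : ∀ i : Fin n, x i.succ - f i (t i.castSucc) (x i.castSucc) = 0)
    (hFt : ∀ i : Fin n, t i.succ - σ i (x i.castSucc) (t i.castSucc) = 0) :
    t 0 = 0 ∧ StrictMono t ∧
      ∀ i : Fin n, φ (t i.succ) (t 0) (x 0) ∈ interior (N i.succ) :=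
  stmt12_general φ hφinit hφflow σ hσ f hf N x t hx hFt0 hFx hFt
end

section
/- Suppose for every δ > 0 and every T ∈ ℝ the perturbed Poincaré map f^{λ,T} (for the equation x' = v(x) + (1/2 - λ)ε(t + T, x), λ ∈ [0, 1/2]) satisfies the covering N f^{λ,T}-covers M, with f^{1/2,T} = f the unperturbed Poincaré map, and suppose (λ, T, x) ↦ f_c^{λ,T}(x) is continuous. If additionally N f-covers M via a homotopy h satisfying conditions 1, 2.1/2.2 of the covering definition, then there exists a continuous homotopy H : [0,1] × ℝ × N_c → ℝᵘ × ℝˢ with H(0,T,x) = f_c^{0,T}(x), H(1,T,(p,q)) = (Ap, 0), H([0,1] × {T} × N_c⁻) ∩ M_c = ∅ and H([0,1] × {T} × N_c) ∩ M_c⁺ = ∅ for every T. -/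
open Set Metric

/-- Support of the standard unit h-set in `ℝᵘ × ℝˢ`. -/
def unitHSet (u s : ℕ) : Set (EuclideanSpace ℝ (Fin u) × EuclideanSpace ℝ (Fin s)) :=
  Metric.closedBall 0 1 ×ˢ Metric.closedBall 0 1

/-- Exit set `N_c⁻`. -/
def unitHSetMinus (u s : ℕ) :
    Set (EuclideanSpace ℝ (Fin u) × EuclideanSpace ℝ (Fin s)) :=
  Metric.sphere 0 1 ×ˢ Metric.closedBall 0 1

/-- Entry set `N_c⁺`. -/
def unitHSetPlus (u s : ℕ) :
    Set (EuclideanSpace ℝ (Fin u) × EuclideanSpace ℝ (Fin s)) :=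
  Metric.closedBall 0 1 ×ˢ Metric.sphere 0 1

/-- The covering relation `N g-covers M` in the unit coordinates: a continuous homotopy
from `g` to `(p,q) ↦ (Ap, 0)` (`A` linear, expanding the unit sphere outside the closed
ball) avoiding `M_c` on `[0,1] × N_c⁻` and avoiding `M_c⁺` on `[0,1] × N_c`. -/
def UnitCovers (u s : ℕ)
    (g : EuclideanSpace ℝ (Fin u) × EuclideanSpace ℝ (Fin s) →
      EuclideanSpace ℝ (Fin u) × EuclideanSpace ℝ (Fin s)) : Prop :=
  ∃ h : ℝ → EuclideanSpace ℝ (Fin u) × EuclideanSpace ℝ (Fin s) →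
      EuclideanSpace ℝ (Fin u) × EuclideanSpace ℝ (Fin s),
    ContinuousOn (fun p : ℝ × _ => h p.1 p.2) (Set.Icc (0 : ℝ) 1 ×ˢ unitHSet u s) ∧
    (∀ x ∈ unitHSet u s, h 0 x = g x) ∧
    (∀ l ∈ Set.Icc (0 : ℝ) 1, ∀ x ∈ unitHSetMinus u s, h l x ∉ unitHSet u s) ∧
    (∀ l ∈ Set.Icc (0 : ℝ) 1, ∀ x ∈ unitHSet u s, h l x ∉ unitHSetPlus u s) ∧
    (0 < u → ∃ A : EuclideanSpace ℝ (Fin u) →ₗ[ℝ] EuclideanSpace ℝ (Fin u),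
      (∀ p, ‖p‖ = 1 → 1 < ‖A p‖) ∧ ∀ x ∈ unitHSet u s, h 1 x = (A x.1, 0)) ∧
    (u = 0 → ∀ x ∈ unitHSet u s, h 1 x = 0)

/-!
On `[0, 1/2]` follow the perturbation `λ ↦ f_c^{λ,T}` from `f_c^{0,T}` to the unperturbed map
`f_c^{1/2,T} = f_c`, then run the covering homotopy `h` of `f_c` at double speed. The first half
avoids `M_c` on `N_c⁻` and `M_c⁺` on `N_c` because each `f_c^{λ,T}` is itself the initial map of
a covering homotopy, the second half because `h` is one. The two halves agree at `λ = 1/2`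
since `f_c^{1/2,T} = f_c = h(0, ·)`, and nothing but the jointly continuous family `f_c^{λ,T}`
depends on `T`.
-/

noncomputable def homotopyConcat {X Y : Type*} (F G : ℝ → X → Y) (l : ℝ) (x : X) : Y :=
  if l ≤ 1 / 2 then F l x else G (2 * l - 1) x

section homotopyConcat

variable {X Y : Type*} {F G : ℝ → X → Y}

@[simp]
theorem homotopyConcat_zero (x : X) : homotopyConcat F G 0 x = F 0 x :=
  if_pos (by norm_num)

@[simp]
theorem homotopyConcat_one (x : X) : homotopyConcat F G 1 x = G 1 x := by
  rw [homotopyConcat, if_neg (by norm_num)]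
  norm_num

theorem continuousOn_homotopyConcat [TopologicalSpace X] [TopologicalSpace Y] {S : Set X}
    (hF : ContinuousOn (fun p : ℝ × X => F p.1 p.2) (Icc 0 (1 / 2) ×ˢ S))
    (hG : ContinuousOn (fun p : ℝ × X => G p.1 p.2) (Icc 0 1 ×ˢ S))
    (hFG : ∀ x ∈ S, F (1 / 2) x = G 0 x) :
    ContinuousOn (fun p : ℝ × X => homotopyConcat F G p.1 p.2) (Icc 0 1 ×ˢ S) := by
  have hclosure_le : closure {p : ℝ × X | p.1 ≤ 1 / 2} = {p | p.1 ≤ 1 / 2} :=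
    (isClosed_le continuous_fst continuous_const).closure_eq
  have hclosure_gt : closure {p : ℝ × X | ¬p.1 ≤ 1 / 2} ⊆ {p | 1 / 2 ≤ p.1} := by
    simp only [not_le]
    exact closure_lt_subset_le continuous_const continuous_fst
  refine ContinuousOn.if ?_ ?_ ?_
  · rintro ⟨l, x⟩ ⟨⟨-, hx⟩, hfr⟩
    have hl : l = 1 / 2 := frontier_le_subset_eq continuous_fst continuous_const hfr
    subst hl
    norm_num [hFG x hx]
  · refine hF.mono ?_
    rw [hclosure_le]
    rintro ⟨l, x⟩ ⟨⟨⟨hl0, -⟩, hx⟩, hl⟩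
    exact ⟨⟨hl0, hl⟩, hx⟩
  · have hrescale : Continuous fun p : ℝ × X => (2 * p.1 - 1, p.2) := by fun_prop
    refine hG.comp hrescale.continuousOn ?_
    rintro ⟨l, x⟩ ⟨⟨⟨-, hl1⟩, hx⟩, hl_closure⟩
    have hl : 1 / 2 ≤ l := hclosure_gt hl_closure
    exact ⟨⟨by linarith, by linarith⟩, hx⟩

theorem homotopyConcat_mem_of_forall {x : X} {P : Set Y}
    (hF : ∀ l ∈ Icc (0 : ℝ) (1 / 2), F l x ∈ P) (hG : ∀ l ∈ Icc (0 : ℝ) 1, G l x ∈ P) {l : ℝ} (hl : l ∈ Icc (0 : ℝ) 1) :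
    homotopyConcat F G l x ∈ P := by
  unfold homotopyConcat
  split_ifs with hle
  · exact hF l ⟨hl.1, hle⟩
  · exact hG _ ⟨by linarith, by linarith [hl.2]⟩

end homotopyConcat

section UnitCovers

variable {u s : ℕ} {g : EuclideanSpace ℝ (Fin u) × EuclideanSpace ℝ (Fin s) →
  EuclideanSpace ℝ (Fin u) × EuclideanSpace ℝ (Fin s)}

theorem unitHSetMinus_subset_unitHSet : unitHSetMinus u s ⊆ unitHSet u s :=
  prod_mono Metric.sphere_subset_closedBall subset_rfl

theorem UnitCovers.apply_notMem_of_mem_unitHSetMinus (hg : UnitCovers u s g)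
    {x} (hx : x ∈ unitHSetMinus u s) : g x ∉ unitHSet u s := by
  obtain ⟨h, -, hh0, hhm, -⟩ := hg
  rw [← hh0 x (unitHSetMinus_subset_unitHSet hx)]
  exact hhm 0 (left_mem_Icc.2 zero_le_one) x hx

theorem UnitCovers.apply_notMem_unitHSetPlus (hg : UnitCovers u s g)
    {x} (hx : x ∈ unitHSet u s) : g x ∉ unitHSetPlus u s := by
  obtain ⟨h, -, hh0, -, hhp, -⟩ := hg
  rw [← hh0 x hx]
  exact hhp 0 (left_mem_Icc.2 zero_le_one) x hx

end UnitCovers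

theorem stmt19_general {u s : ℕ}
    (F : ℝ → ℝ → EuclideanSpace ℝ (Fin u) × EuclideanSpace ℝ (Fin s) →
      EuclideanSpace ℝ (Fin u) × EuclideanSpace ℝ (Fin s))
    (hFc : ContinuousOn
      (fun p : ℝ × ℝ × (EuclideanSpace ℝ (Fin u) × EuclideanSpace ℝ (Fin s)) =>
        F p.1 p.2.1 p.2.2)
      (Set.Icc (0 : ℝ) (1/2) ×ˢ (Set.univ ×ˢ unitHSet u s)))
    (hFcov : ∀ l ∈ Set.Icc (0 : ℝ) (1/2), ∀ T : ℝ, UnitCovers u s (F l T))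
    (f : EuclideanSpace ℝ (Fin u) × EuclideanSpace ℝ (Fin s) →
      EuclideanSpace ℝ (Fin u) × EuclideanSpace ℝ (Fin s))
    (hf12 : ∀ T : ℝ, ∀ x, F (1/2) T x = f x)
    (h : ℝ → EuclideanSpace ℝ (Fin u) × EuclideanSpace ℝ (Fin s) →
      EuclideanSpace ℝ (Fin u) × EuclideanSpace ℝ (Fin s))
    (A : EuclideanSpace ℝ (Fin u) →ₗ[ℝ] EuclideanSpace ℝ (Fin u))
    (hhc : ContinuousOn (fun p : ℝ × _ => h p.1 p.2) (Set.Icc (0 : ℝ) 1 ×ˢ unitHSet u s))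
    (hh0 : ∀ x ∈ unitHSet u s, h 0 x = f x)
    (hh1 : ∀ x ∈ unitHSet u s, h 1 x = (A x.1, 0))
    (hhm : ∀ l ∈ Set.Icc (0 : ℝ) 1, ∀ x ∈ unitHSetMinus u s, h l x ∉ unitHSet u s)
    (hhp : ∀ l ∈ Set.Icc (0 : ℝ) 1, ∀ x ∈ unitHSet u s, h l x ∉ unitHSetPlus u s) :
    ∃ H : ℝ → ℝ → EuclideanSpace ℝ (Fin u) × EuclideanSpace ℝ (Fin s) →
        EuclideanSpace ℝ (Fin u) × EuclideanSpace ℝ (Fin s),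
      ContinuousOn
        (fun p : ℝ × ℝ × (EuclideanSpace ℝ (Fin u) × EuclideanSpace ℝ (Fin s)) =>
          H p.1 p.2.1 p.2.2)
        (Set.Icc (0 : ℝ) 1 ×ˢ (Set.univ ×ˢ unitHSet u s)) ∧
      (∀ T : ℝ, ∀ x ∈ unitHSet u s, H 0 T x = F 0 T x) ∧
      (∀ T : ℝ, ∀ x ∈ unitHSet u s, H 1 T x = (A x.1, 0)) ∧
      (∀ T : ℝ, ∀ l ∈ Set.Icc (0 : ℝ) 1, ∀ x ∈ unitHSetMinus u s,
        H l T x ∉ unitHSet u s) ∧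
      (∀ T : ℝ, ∀ l ∈ Set.Icc (0 : ℝ) 1, ∀ x ∈ unitHSet u s,
        H l T x ∉ unitHSetPlus u s) := by
  refine ⟨fun l T x => homotopyConcat (fun l (y : ℝ × _) => F l y.1 y.2)
    (fun l y => h l y.2) l (T, x), ?_, fun T x _ => homotopyConcat_zero _,
    fun T x hx => (homotopyConcat_one _).trans (hh1 x hx), ?_, ?_⟩
  · have hh_cont : ContinuousOn (fun p : ℝ × ℝ × _ => h p.1 p.2.2)
        (Icc 0 1 ×ˢ (univ ×ˢ unitHSet u s)) :=
      hhc.comp (continuous_fst.prodMk (continuous_snd.comp continuous_snd)).continuousOn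
        fun _ hp => ⟨hp.1, hp.2.2⟩
    exact continuousOn_homotopyConcat hFc hh_cont fun y hy => (hf12 _ _).trans (hh0 _ hy.2).symm
  · intro T l hl x hx
    exact homotopyConcat_mem_of_forall (P := (unitHSet u s)ᶜ)
      (fun l' hl' => (hFcov l' hl' T).apply_notMem_of_mem_unitHSetMinus hx)
      (fun l' hl' => hhm l' hl' x hx) hl
  · intro T l hl x hx
    exact homotopyConcat_mem_of_forall (P := (unitHSetPlus u s)ᶜ)
      (fun l' hl' => (hFcov l' hl' T).apply_notMem_unitHSetPlus hx)
      (fun l' hl' => hhp l' hl' x hx) hl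

/-- Lemma 5: uniform-in-`T` covering homotopy for non-autonomous perturbations.  Here
`F l T` is the (unit-coordinate) Poincaré map `f_c^{λ,T}` of the perturbed equation
`x' = v(x) + (1/2 - λ)ε(t + T, x)` for `λ ∈ [0,1/2]`, continuous jointly in
`(λ, T, x)`, each covering `M`; `F (1/2) T = f` is the unperturbed Poincaré map, which
covers `M` via a homotopy `h` ending at `(p,q) ↦ (A p, 0)`.  Then there is a continuous
homotopy `H(λ,T,x)` with `H(0,T,·) = F 0 T`, `H(1,T,(p,q)) = (A p, 0)` and the
exit/entry avoidance conditions, uniformly for every `T`. -/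
theorem stmt19 {u s : ℕ} (hu : 0 < u)
    (F : ℝ → ℝ → EuclideanSpace ℝ (Fin u) × EuclideanSpace ℝ (Fin s) →
      EuclideanSpace ℝ (Fin u) × EuclideanSpace ℝ (Fin s))
    (hFc : ContinuousOn
      (fun p : ℝ × ℝ × (EuclideanSpace ℝ (Fin u) × EuclideanSpace ℝ (Fin s)) =>
        F p.1 p.2.1 p.2.2)
      (Set.Icc (0 : ℝ) (1/2) ×ˢ (Set.univ ×ˢ unitHSet u s)))
    (hFcov : ∀ l ∈ Set.Icc (0 : ℝ) (1/2), ∀ T : ℝ, UnitCovers u s (F l T))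
    (f : EuclideanSpace ℝ (Fin u) × EuclideanSpace ℝ (Fin s) →
      EuclideanSpace ℝ (Fin u) × EuclideanSpace ℝ (Fin s))
    (hf12 : ∀ T : ℝ, ∀ x, F (1/2) T x = f x)
    (h : ℝ → EuclideanSpace ℝ (Fin u) × EuclideanSpace ℝ (Fin s) →
      EuclideanSpace ℝ (Fin u) × EuclideanSpace ℝ (Fin s))
    (A : EuclideanSpace ℝ (Fin u) →ₗ[ℝ] EuclideanSpace ℝ (Fin u))
    (hA : ∀ p, ‖p‖ = 1 → 1 < ‖A p‖)
    (hhc : ContinuousOn (fun p : ℝ × _ => h p.1 p.2) (Set.Icc (0 : ℝ) 1 ×ˢ unitHSet u s))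
    (hh0 : ∀ x ∈ unitHSet u s, h 0 x = f x)
    (hh1 : ∀ x ∈ unitHSet u s, h 1 x = (A x.1, 0))
    (hhm : ∀ l ∈ Set.Icc (0 : ℝ) 1, ∀ x ∈ unitHSetMinus u s, h l x ∉ unitHSet u s)
    (hhp : ∀ l ∈ Set.Icc (0 : ℝ) 1, ∀ x ∈ unitHSet u s, h l x ∉ unitHSetPlus u s) :
    ∃ H : ℝ → ℝ → EuclideanSpace ℝ (Fin u) × EuclideanSpace ℝ (Fin s) →
        EuclideanSpace ℝ (Fin u) × EuclideanSpace ℝ (Fin s),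
      ContinuousOn
        (fun p : ℝ × ℝ × (EuclideanSpace ℝ (Fin u) × EuclideanSpace ℝ (Fin s)) =>
          H p.1 p.2.1 p.2.2)
        (Set.Icc (0 : ℝ) 1 ×ˢ (Set.univ ×ˢ unitHSet u s)) ∧
      (∀ T : ℝ, ∀ x ∈ unitHSet u s, H 0 T x = F 0 T x) ∧
      (∀ T : ℝ, ∀ x ∈ unitHSet u s, H 1 T x = (A x.1, 0)) ∧
      (∀ T : ℝ, ∀ l ∈ Set.Icc (0 : ℝ) 1, ∀ x ∈ unitHSetMinus u s,
        H l T x ∉ unitHSet u s) ∧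
      (∀ T : ℝ, ∀ l ∈ Set.Icc (0 : ℝ) 1, ∀ x ∈ unitHSet u s,
        H l T x ∉ unitHSetPlus u s) :=
  stmt19_general F hFc hFcov f hf12 h A hhc hh0 hh1 hhm hhp
end
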